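/- arXiv:2406.07554 — 3 statements merged into one kernel-verified Lean document; each statement's English description precedes it below -/
import Mathlib

section
/- Let g be a centerless Lie 2-algebra over F with toral rank MT(g) = r and let t be a maximal torus of g of dimension r. Then there exists a basis of the dual space t* consisting of t-roots of g, and moreover dim(g) ≥ 2r. -/
/-- A 2-map on a Lie algebra over the field `F` (char 2 version of a restricted structure):
`(c • x)^[2] = c^2 • x^[2]`, `ad (x^[2]) = (ad x) ∘ (ad x)` and
`(x+y)^[2] = x^[2] + y^[2] + [x,y]`. -/
structure IsTwoMap (F : Type*) [Field F] {g : Type*} [LieRing g] [LieAlgebra F g]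
    (p : g → g) : Prop where
  smul_pow : ∀ (c : F) (x : g), p (c • x) = (c ^ 2) • p x
  ad_pow : ∀ x y : g, ⁅p x, y⁆ = ⁅x, ⁅x, y⁆⁆
  add_pow : ∀ x y : g, p (x + y) = p x + p y + ⁅x, y⁆

/-- An element is 2-nilpotent if some iterate of the 2-map annihilates it. -/
def IsTwoNilpotent {g : Type*} [Zero g] (p : g → g) (x : g) : Prop :=
  ∃ k : ℕ, p^[k] x = 0

/-- A torus of a Lie 2-algebra: a Lie subalgebra closed under the 2-map on which the
2-map is invertible (bijective). -/
def IsTorus (F : Type*) [Field F] {g : Type*} [LieRing g] [LieAlgebra F g]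
    (p : g → g) (t : LieSubalgebra F g) : Prop :=
  (∀ x ∈ t, p x ∈ t) ∧ Set.BijOn p (t : Set g) (t : Set g)

/-- A maximal torus of a Lie 2-algebra. -/
def IsMaxTorus (F : Type*) [Field F] {g : Type*} [LieRing g] [LieAlgebra F g]
    (p : g → g) (t : LieSubalgebra F g) : Prop :=
  IsTorus F p t ∧ ∀ s : LieSubalgebra F g, IsTorus F p s → t ≤ s → s = t

/-- The weight (root) space of a linear functional `lam` on a torus `t`:
`g_lam = {v | [x, v] = lam x • v for all x ∈ t}`. -/
def rootSpace {F : Type*} [Field F] {g : Type*} [LieRing g] [LieAlgebra F g]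
    (t : LieSubalgebra F g) (lam : Module.Dual F t) : Submodule F g where
  carrier := {v | ∀ x : t, ⁅(x : g), v⁆ = lam x • v}
  add_mem' := by
    intro a b ha hb x
    rw [lie_add, ha x, hb x, smul_add]
  zero_mem' := by
    intro x
    rw [lie_zero, smul_zero]
  smul_mem' := by
    intro c v hv x
    rw [lie_smul, hv x, smul_comm]

/-- The set of `t`-roots: nonzero functionals with nonzero root space. -/
def rootSet {F : Type*} [Field F] {g : Type*} [LieRing g] [LieAlgebra F g]
    (t : LieSubalgebra F g) : Set (Module.Dual F t) :=
  {lam | lam ≠ 0 ∧ rootSpace t lam ≠ ⊥}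

/-- The subspace `N(σ, δ) = {x ∈ g_σ : [x, g_σ] ⊆ n and [[x, g_δ], g_{σ+δ}] ⊆ n}`,
given as `Nspace n g_σ g_δ g_{σ+δ}`. -/
def Nspace {F : Type*} [Field F] {g : Type*} [LieRing g] [LieAlgebra F g]
    (n gs gd gsd : Submodule F g) : Submodule F g where
  carrier := {x | x ∈ gs ∧ (∀ y ∈ gs, ⁅x, y⁆ ∈ n) ∧ ∀ z ∈ gd, ∀ w ∈ gsd, ⁅⁅x, z⁆, w⁆ ∈ n}
  add_mem' := by
    intro a b ha hb
    obtain ⟨ha1, ha2, ha3⟩ := ha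
    obtain ⟨hb1, hb2, hb3⟩ := hb
    refine ⟨gs.add_mem ha1 hb1, fun y hy => ?_, fun z hz w hw => ?_⟩
    · rw [add_lie]
      exact n.add_mem (ha2 y hy) (hb2 y hy)
    · rw [add_lie, add_lie]
      exact n.add_mem (ha3 z hz w hw) (hb3 z hz w hw)
  zero_mem' := by
    refine ⟨gs.zero_mem, fun y hy => ?_, fun z hz w hw => ?_⟩
    · rw [zero_lie]; exact n.zero_mem
    · rw [zero_lie, zero_lie]; exact n.zero_mem
  smul_mem' := by
    intro c x hx
    obtain ⟨h1, h2, h3⟩ := hx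
    refine ⟨gs.smul_mem c h1, fun y hy => ?_, fun z hz w hw => ?_⟩
    · rw [smul_lie]; exact n.smul_mem c (h2 y hy)
    · rw [smul_lie, smul_lie]; exact n.smul_mem c (h3 z hz w hw)

/-! Each element `x` of a torus lies in the span of its iterates `p^[k+1] x` under the 2-map,
and `ad (p^[k] x) = (ad x)^(2^k)`, so `ad x` is annihilated by `X - f` with `f` in the span of
the `X^(2^(k+1))`; in characteristic 2 this polynomial has derivative `1`, hence `ad x` is
semisimple. A torus acting semisimply is abelian (an eigenvector `z` of `ad x` with eigenvalue
`μ ≠ 0` would make `ad z` nilpotent on `x`), so `g` is the sum of the root spaces `g_λ`,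
`λ ∈ t*`. An element of `t` on which all roots vanish then acts trivially on every `g_λ`, hence
is central and zero: the roots span `t*`. Finally `t ⊆ g_0`, and `g_0` together with the root
spaces of a basis of roots is an independent family, which gives `dim g ≥ r + r`. -/

open Module
open LieAlgebra (ad ad_apply)

attribute [local instance] LieRing.ofAssociativeRing

open Polynomial in
theorem Module.End.isSemisimple_of_mem_span_pow_pow {K M : Type*} [Field K] [AddCommGroup M]
    [Module K M] (q : ℕ) [CharP K q] {φ : End K M}
    (h : φ ∈ Submodule.span K (Set.range fun k : ℕ => φ ^ q ^ (k + 1))) : φ.IsSemisimple := by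
  have hrange : (Set.range fun k : ℕ => φ ^ q ^ (k + 1)) =
      (aeval φ).toLinearMap '' Set.range fun k : ℕ => (X : K[X]) ^ q ^ (k + 1) := by
    rw [← Set.range_comp]
    simp [Function.comp_def]
  rw [hrange, Submodule.span_image] at h
  obtain ⟨f, hf, hfφ⟩ := h
  -- `f` has derivative zero, so `X - f` is separable and annihilates `φ`
  have hderiv : derivative f = 0 := by
    refine (Submodule.span_le (p := LinearMap.ker derivative)).2 ?_ hf
    rintro _ ⟨k, rfl⟩
    simp [derivative_X_pow, Nat.cast_pow, CharP.cast_eq_zero]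
  refine Module.End.isSemisimple_of_squarefree_aeval_eq_zero (p := X - f) ?_ ?_
  · refine Polynomial.Separable.squarefree ?_
    rw [Polynomial.separable_def, derivative_sub, derivative_X, hderiv, sub_zero]
    exact isCoprime_one_right
  · simpa [sub_eq_zero] using hfφ.symm

theorem Module.End.IsSemisimple.apply_eq_zero_of_apply_apply_eq_zero {K M : Type*} [Field K]
    [AddCommGroup M] [Module K M] {φ : End K M} (hφ : φ.IsSemisimple) {v : M}
    (h : φ (φ v) = 0) : φ v = 0 := by
  have hv : v ∈ φ.maxGenEigenspace 0 :=
    (Module.End.mem_maxGenEigenspace _ _ _).2 ⟨2, by simpa [pow_two] using h⟩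
  rw [hφ.isFinitelySemisimple.maxGenEigenspace_eq_eigenspace] at hv
  simpa using hv

theorem iSupIndep.sum_finrank_le {K V ι : Type*} [DivisionRing K] [AddCommGroup V] [Module K V]
    [FiniteDimensional K V] [Fintype ι] {N : ι → Submodule K V} (h : iSupIndep N) :
    ∑ i, finrank K (N i) ≤ finrank K V := by
  classical
  rw [← Module.finrank_directSum]
  exact LinearMap.finrank_le_finrank_of_injective h.dfinsupp_lsum_injective

theorem Module.exists_basis_fin_forall_mem_of_span_eq_top {K V : Type*} [DivisionRing K]
    [AddCommGroup V] [Module K V] [FiniteDimensional K V] {s : Set V}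
    (hs : Submodule.span K s = ⊤) {n : ℕ} (hn : finrank K V = n) :
    ∃ b : Basis (Fin n) K V, ∀ i, b i ∈ s := by
  let b := Basis.ofSpan hs.ge
  refine ⟨b.reindex (b.indexEquiv (finBasisOfFinrankEq K V hn)), fun i => ?_⟩
  rw [Basis.reindex_apply]
  exact Basis.ofSpan_subset hs.ge ⟨_, rfl⟩

namespace IsTwoMap

variable {F : Type*} [Field F] {g : Type*} [LieRing g] [LieAlgebra F g] {p : g → g}

theorem map_zero (hp : IsTwoMap F p) : p 0 = 0 := by simpa using hp.smul_pow 0 0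

theorem map_add_of_lie_eq_zero (hp : IsTwoMap F p) {x y : g} (h : ⁅x, y⁆ = 0) :
    p (x + y) = p x + p y := by
  rw [hp.add_pow, h, add_zero]

theorem ad_iterate (hp : IsTwoMap F p) (x : g) (k : ℕ) :
    ad F g (p^[k] x) = ad F g x ^ 2 ^ k := by
  induction k with
  | zero => simp
  | succ k ih =>
    ext y
    rw [Function.iterate_succ_apply', ad_apply, hp.ad_pow, pow_succ, pow_mul, sq,
      Module.End.mul_apply, ← ih, ad_apply, ad_apply]

theorem lie_iterate_self (hp : IsTwoMap F p) (x : g) (k : ℕ) : ⁅p^[k] x, x⁆ = 0 := by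
  obtain ⟨n, hn⟩ := Nat.exists_eq_add_one_of_ne_zero (pow_ne_zero k two_ne_zero)
  rw [← ad_apply (R := F), hp.ad_iterate, hn, pow_succ, Module.End.mul_apply, ad_apply,
    lie_self, LinearMap.map_zero]

theorem lie_iterate_iterate (hp : IsTwoMap F p) (x : g) (j k : ℕ) :
    ⁅p^[j] x, p^[k] x⁆ = 0 := by
  rcases le_total j k with hjk | hkj
  · obtain ⟨m, rfl⟩ := Nat.exists_eq_add_of_le hjk
    rw [add_comm, Function.iterate_add_apply, ← lie_skew, hp.lie_iterate_self, neg_zero]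
  · obtain ⟨m, rfl⟩ := Nat.exists_eq_add_of_le hkj
    rw [add_comm, Function.iterate_add_apply, hp.lie_iterate_self]

theorem lie_eq_zero_of_mem_span_iterate (hp : IsTwoMap F p) (x : g) {v w : g}
    (hv : v ∈ Submodule.span F (Set.range fun k : ℕ => p^[k] x))
    (hw : w ∈ Submodule.span F (Set.range fun k : ℕ => p^[k] x)) : ⁅v, w⁆ = 0 := by
  induction hv, hw using Submodule.span_induction₂ with
  | mem_mem _ _ hv hw =>
    obtain ⟨j, rfl⟩ := hv
    obtain ⟨k, rfl⟩ := hw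
    exact hp.lie_iterate_iterate x j k
  | zero_left => exact zero_lie _
  | zero_right => exact lie_zero _
  | add_left _ _ _ _ _ _ h₁ h₂ => rw [add_lie, h₁, h₂, add_zero]
  | add_right _ _ _ _ _ _ h₁ h₂ => rw [lie_add, h₁, h₂, add_zero]
  | smul_left _ _ _ _ _ h => rw [smul_lie, h, smul_zero]
  | smul_right _ _ _ _ _ h => rw [lie_smul, h, smul_zero]

theorem map_mem_span_iterate_succ (hp : IsTwoMap F p) (x : g) {v : g}
    (hv : v ∈ Submodule.span F (Set.range fun k : ℕ => p^[k] x)) :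
    p v ∈ Submodule.span F (Set.range fun k : ℕ => p^[k + 1] x) := by
  induction hv using Submodule.span_induction with
  | mem y hy =>
    obtain ⟨k, rfl⟩ := hy
    rw [← Function.iterate_succ_apply' p]
    exact Submodule.subset_span ⟨k, rfl⟩
  | zero => rw [hp.map_zero]; exact Submodule.zero_mem _
  | add y z hy hz ihy ihz =>
    rw [hp.map_add_of_lie_eq_zero (hp.lie_eq_zero_of_mem_span_iterate x hy hz)]
    exact Submodule.add_mem _ ihy ihz
  | smul c y _ ih => rw [hp.smul_pow]; exact Submodule.smul_mem _ _ ih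

end IsTwoMap

namespace IsTorus

variable {F : Type*} [Field F] {g : Type*} [LieRing g] [LieAlgebra F g] {p : g → g}
  {t : LieSubalgebra F g}

theorem iterate_mem (ht : IsTorus F p t) {x : g} (hx : x ∈ t) (k : ℕ) : p^[k] x ∈ t := by
  induction k with
  | zero => exact hx
  | succ k ih => rw [Function.iterate_succ_apply']; exact ht.1 _ ih

/-- The span `S` of the iterates of `x` is abelian, so `p` is Frobenius-semilinear on it; being
injective on `t ⊇ S`, it maps a basis of `S` to an independent family in the span `T ⊆ S` of the
iterates `p^[k+1] x`, whence `T = S ∋ x`. -/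
theorem mem_span_iterate_succ [ExpChar F 2] [PerfectRing F 2] [FiniteDimensional F g]
    (hp : IsTwoMap F p) (ht : IsTorus F p t) {x : g} (hx : x ∈ t) :
    x ∈ Submodule.span F (Set.range fun k : ℕ => p^[k + 1] x) := by
  set S := Submodule.span F (Set.range fun k : ℕ => p^[k] x)
  set T := Submodule.span F (Set.range fun k : ℕ => p^[k + 1] x)
  have hTS : T ≤ S := Submodule.span_le.2 <| by
    rintro _ ⟨k, rfl⟩
    exact Submodule.subset_span ⟨k + 1, rfl⟩
  have hSt : S ≤ t.toSubmodule := Submodule.span_le.2 <| by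
    rintro _ ⟨k, rfl⟩
    exact ht.iterate_mem hx k
  let j : S →+ T :=
    { toFun := fun v => ⟨p v, hp.map_mem_span_iterate_succ x v.2⟩
      map_zero' := Subtype.ext hp.map_zero
      map_add' := fun v w => Subtype.ext <|
        hp.map_add_of_lie_eq_zero (hp.lie_eq_zero_of_mem_span_iterate x v.2 w.2) }
  have hj : ∀ v, j v = 0 → v = 0 := fun v hv => Subtype.ext <|
    ht.2.injOn (hSt v.2) t.zero_mem <| by
      rw [ZeroMemClass.coe_zero, hp.map_zero]
      exact congrArg Subtype.val hv
  have hind := (Module.finBasis F S).linearIndependent.map_of_surjective_injective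
    (frobenius F 2) j (surjective_frobenius F 2) hj
    (fun c v => Subtype.ext <| by simp [j, hp.smul_pow, frobenius_def])
  have hST : finrank F S ≤ finrank F T := by simpa using hind.fintype_card_le_finrank
  rw [show T = S from Submodule.eq_of_le_of_finrank_le hTS hST]
  exact Submodule.subset_span ⟨0, rfl⟩

theorem isSemisimple_ad [CharP F 2] [PerfectRing F 2] [FiniteDimensional F g]
    (hp : IsTwoMap F p) (ht : IsTorus F p t) {x : g} (hx : x ∈ t) :
    (ad F g x).IsSemisimple := by
  apply Module.End.isSemisimple_of_mem_span_pow_pow 2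
  have := Submodule.mem_map_of_mem (f := (ad F g).toLinearMap) (ht.mem_span_iterate_succ hp hx)
  rw [Submodule.map_span, ← Set.range_comp] at this
  simpa only [Function.comp_def, LieHom.coe_toLinearMap, hp.ad_iterate] using this

theorem lie_eq_zero [IsAlgClosed F] [CharP F 2] [FiniteDimensional F g]
    (hp : IsTwoMap F p) (ht : IsTorus F p t) {x y : g} (hx : x ∈ t) (hy : y ∈ t) :
    ⁅x, y⁆ = 0 := by
  have hmem : t.toSubmodule ∈ (ad F g x).invtSubmodule := fun v hv => t.lie_mem hx hv
  suffices (ad F g x).restrict hmem = 0 from congrArg Subtype.val (LinearMap.congr_fun this ⟨y, hy⟩)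
  refine ((ht.isSemisimple_ad hp hx).restrict hmem).eq_zero_iff_forall_eigenvalue.2
    fun μ hμ => ?_
  obtain ⟨z, hz⟩ := hμ.exists_hasEigenvector
  have hxz : ⁅x, (z : g)⁆ = μ • (z : g) := congrArg Subtype.val hz.apply_eq_smul
  -- `ad z` kills `⁅z, x⁆ = -μ • z`, so by semisimplicity it kills `x`
  have hzx : ⁅(z : g), x⁆ = 0 := by
    refine (ht.isSemisimple_ad hp z.2).apply_eq_zero_of_apply_apply_eq_zero ?_
    rw [ad_apply, ad_apply, ← lie_skew (z : g) x, hxz, lie_neg, lie_smul, lie_self, smul_zero,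
      neg_zero]
  have hz0 : (z : g) ≠ 0 := by simpa using hz.2
  rw [← lie_skew, hxz, neg_eq_zero, smul_eq_zero] at hzx
  exact hzx.resolve_right hz0

theorem isLieAbelian [IsAlgClosed F] [CharP F 2] [FiniteDimensional F g]
    (hp : IsTwoMap F p) (ht : IsTorus F p t) : IsLieAbelian t :=
  ⟨fun x y => Subtype.ext (ht.lie_eq_zero hp x.2 y.2)⟩

end IsTorus

section RootSpace

open LieModule

variable {F : Type*} [Field F] {g : Type*} [LieRing g] [LieAlgebra F g] (t : LieSubalgebra F g)

theorem rootSpace_eq_weightSpace (lam : Dual F t) :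
    rootSpace t lam = (weightSpace g (lam : t → F)).toSubmodule := by
  ext v
  rw [LieSubmodule.mem_toSubmodule, mem_weightSpace]
  rfl

theorem iSupIndep_rootSpace [LieRing.IsNilpotent t] : iSupIndep (rootSpace t) := by
  rw [funext (rootSpace_eq_weightSpace t), LieSubmodule.iSupIndep_toSubmodule]
  exact ((iSupIndep_genWeightSpace F t g).comp DFunLike.coe_injective).mono
    fun lam => weightSpace_le_genWeightSpace g lam

variable {t}

theorem genWeightSpace_le_weightSpace [LieRing.IsNilpotent t]
    (hss : ∀ x ∈ t, (ad F g x).IsSemisimple) (χ : t → F) :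
    genWeightSpace g χ ≤ weightSpace g χ := by
  intro v hv
  rw [mem_weightSpace]
  intro x
  obtain ⟨k, hk⟩ := (mem_genWeightSpace g χ v).1 hv x
  have hv' : v ∈ (ad F g x).maxGenEigenspace (χ x) :=
    (Module.End.mem_maxGenEigenspace _ _ _).2 ⟨k, hk⟩
  rw [(hss x x.2).isFinitelySemisimple.maxGenEigenspace_eq_eigenspace,
    Module.End.mem_eigenspace_iff] at hv'
  exact hv'

theorem iSup_rootSpace_eq_top [IsAlgClosed F] [FiniteDimensional F g] [IsLieAbelian t]
    (hss : ∀ x ∈ t, (ad F g x).IsSemisimple) : ⨆ lam, rootSpace t lam = ⊤ := by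
  have htop := congrArg LieSubmodule.toSubmodule (iSup_genWeightSpace_eq_top' F t g)
  rw [LieSubmodule.iSup_toSubmodule, LieSubmodule.top_toSubmodule] at htop
  refine eq_top_iff.2 (htop ▸ iSup_le fun χ => ?_)
  refine le_trans ?_ (le_iSup _ (Weight.toLinear F t g χ))
  rw [rootSpace_eq_weightSpace, LieSubmodule.toSubmodule_le_toSubmodule]
  exact genWeightSpace_le_weightSpace hss χ

theorem toSubmodule_le_rootSpace_zero [IsLieAbelian t] : t.toSubmodule ≤ rootSpace t 0 :=
  fun v hv x => by
    rw [LinearMap.zero_apply, zero_smul]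
    exact congrArg Subtype.val (trivial_lie_zero t t x ⟨v, hv⟩)

theorem eq_zero_of_forall_mem_rootSet_apply_eq_zero (hcenter : LieAlgebra.center F g = ⊥)
    (htop : ⨆ lam, rootSpace t lam = ⊤) {x : t} (hx : ∀ lam ∈ rootSet t, lam x = 0) :
    x = 0 := by
  have hker : ⨆ lam, rootSpace t lam ≤ LinearMap.ker (ad F g x) := iSup_le fun lam v hv => by
    by_cases hlam : lam ∈ rootSet t
    · rw [LinearMap.mem_ker, ad_apply, hv x, hx lam hlam, zero_smul]
    obtain rfl | hbot : lam = 0 ∨ rootSpace t lam = ⊥ := by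
      by_contra! h
      exact hlam h
    · rw [LinearMap.mem_ker, ad_apply, hv x, LinearMap.zero_apply, zero_smul]
    · rw [hbot, Submodule.mem_bot] at hv
      rw [hv]
      exact Submodule.zero_mem _
  have hcen : (x : g) ∈ LieAlgebra.center F g := by
    rw [← LieAlgebra.self_module_ker_eq_center, LieModule.mem_ker]
    intro v
    exact hker (htop ▸ Submodule.mem_top)
  rw [hcenter, LieSubmodule.mem_bot] at hcen
  exact Subtype.ext hcen

theorem span_rootSet_eq_top [FiniteDimensional F g] (hcenter : LieAlgebra.center F g = ⊥)
    (htop : ⨆ lam, rootSpace t lam = ⊤) : Submodule.span F (rootSet t) = ⊤ := by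
  have hco : (Submodule.span F (rootSet t)).dualCoannihilator = ⊥ :=
    (Submodule.eq_bot_iff _).2 fun x hx =>
      eq_zero_of_forall_mem_rootSet_apply_eq_zero hcenter htop fun lam hlam =>
        (Submodule.mem_dualCoannihilator x).1 hx lam (Submodule.subset_span hlam)
  rw [← Subspace.dualCoannihilator_dualAnnihilator_eq (W := Submodule.span F (rootSet t)), hco,
    Submodule.dualAnnihilator_bot]

end RootSpace

theorem statement1_general
    {F : Type*} [Field F] [IsAlgClosed F] [CharP F 2]
    {g : Type*} [LieRing g] [LieAlgebra F g] [FiniteDimensional F g]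
    (p : g → g) (hp : IsTwoMap F p)
    (hcenter : LieAlgebra.center F g = ⊥)
    (r : ℕ) (t : LieSubalgebra F g) (hmax : IsMaxTorus F p t)
    (hdimt : Module.finrank F t = r) :
    (∃ b : Module.Basis (Fin r) F (Module.Dual F t), ∀ i, b i ∈ rootSet t) ∧
      2 * r ≤ Module.finrank F g := by
  have ht := hmax.1
  have := ht.isLieAbelian hp
  have htop := iSup_rootSpace_eq_top fun x hx => ht.isSemisimple_ad hp hx
  obtain ⟨b, hb⟩ := Module.exists_basis_fin_forall_mem_of_span_eq_top
    (span_rootSet_eq_top hcenter htop) (Subspace.dual_finrank_eq.trans hdimt)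
  refine ⟨⟨b, hb⟩, ?_⟩
  let lam : Option (Fin r) → Dual F t := (Option.elim · 0 b)
  have hinj : Function.Injective lam := by
    rintro (_ | i) (_ | j) h
    · rfl
    · exact absurd h.symm (hb j).1
    · exact absurd h (hb i).1
    · exact congrArg some (b.injective h)
  have hpos (i : Fin r) : 1 ≤ finrank F (rootSpace t (b i)) :=
    Nat.one_le_iff_ne_zero.2 fun h => (hb i).2 (Submodule.finrank_eq_zero.1 h)
  calc 2 * r = finrank F t + ∑ _i : Fin r, 1 := by simp [hdimt, two_mul]
    _ ≤ finrank F (rootSpace t 0) + ∑ i, finrank F (rootSpace t (b i)) :=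
      add_le_add (Submodule.finrank_mono toSubmodule_le_rootSpace_zero)
        (Finset.sum_le_sum fun i _ => hpos i)
    _ = ∑ i, finrank F (rootSpace t (lam i)) :=
      (Fintype.sum_option fun i => finrank F (rootSpace t (lam i))).symm
    _ ≤ finrank F g := ((iSupIndep_rootSpace t).comp hinj).sum_finrank_le

/-- a centerless Lie 2-algebra of toral rank `r` admits a basis of the dual
of its maximal torus consisting of roots, and `dim g ≥ 2r`. -/
theorem statement1
    {F : Type*} [Field F] [IsAlgClosed F] [CharP F 2]
    {g : Type*} [LieRing g] [LieAlgebra F g] [FiniteDimensional F g]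
    (p : g → g) (hp : IsTwoMap F p)
    (hcenter : LieAlgebra.center F g = ⊥)
    (r : ℕ) (t : LieSubalgebra F g) (hmax : IsMaxTorus F p t)
    (hdimt : Module.finrank F t = r)
    (hrank : ∀ s : LieSubalgebra F g, IsTorus F p s → Module.finrank F s ≤ r) :
    (∃ b : Module.Basis (Fin r) F (Module.Dual F t), ∀ i, b i ∈ rootSet t) ∧
      2 * r ≤ Module.finrank F g :=
  statement1_general p hp hcenter r t hmax hdimt
end

section
/- Let g be a centerless Lie 2-algebra with MT(g) = 3, standard maximal torus t with toral basis {t1, t2, t3} and dual basis {α, β, γ} of t*. If ξ = α + β + γ is a t-root, then [g_ξ, g_ξ] ⊆ span{t1 + t3, t2 + t3} ⊕ n. -/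
theorem mem_rootSpace_iff {F : Type*} [Field F] {g : Type*} [LieRing g] [LieAlgebra F g]
    (t : LieSubalgebra F g) (lam : Module.Dual F t) (v : g) :
    v ∈ rootSpace t lam ↔ ∀ x : t, ⁅(x : g), v⁆ = lam x • v := Iff.rfl

theorem aux_iter {F : Type*} [Field F] {g : Type*} [LieRing g] [LieAlgebra F g]
    (p : g → g) (hp : IsTwoMap F p) (m z : g) (c : F) (hmz : ⁅m, z⁆ = c • z) :
    ∀ k : ℕ, ⁅p^[k] m, z⁆ = c ^ (2 ^ k) • z := by
  intro k
  induction k with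
  | zero => simpa using hmz
  | succ j ih =>
    rw [Function.iterate_succ_apply', hp.ad_pow, ih, lie_smul, ih, smul_smul, ← pow_add]
    ring_nf

/-- if `ξ = α + β + γ` is a root, then
`[g_ξ, g_ξ] ⊆ span{t1 + t3, t2 + t3} ⊕ n`. -/
theorem statement8
    {F : Type*} [Field F] [IsAlgClosed F] [CharP F 2]
    {g : Type*} [LieRing g] [LieAlgebra F g] [FiniteDimensional F g]
    (p : g → g) (hp : IsTwoMap F p)
    (hcenter : LieAlgebra.center F g = ⊥)
    (t : LieSubalgebra F g) (hmax : IsMaxTorus F p t)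
    (n : Submodule F g)
    (hn : ∀ x : g, x ∈ n ↔ x ∈ rootSpace t 0 ∧ IsTwoNilpotent p x)
    (hstd : ∀ x ∈ rootSpace t 0, ∀ y ∈ n, ⁅x, y⁆ ∈ n)
    (hdecomp : rootSpace t 0 = t.toSubmodule ⊔ n)
    (hdisj : Disjoint t.toSubmodule n)
    (hrank : ∀ s : LieSubalgebra F g, IsTorus F p s → Module.finrank F s ≤ 3)
    (hdimt : Module.finrank F t = 3)
    (t₁ t₂ t₃ : t)
    (htor1 : p (t₁ : g) = (t₁ : g)) (htor2 : p (t₂ : g) = (t₂ : g))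
    (htor3 : p (t₃ : g) = (t₃ : g))
    (hspan : Submodule.span F ({t₁, t₂, t₃} : Set t) = ⊤)
    (α β γ : Module.Dual F t)
    (hα : α t₁ = 1 ∧ α t₂ = 0 ∧ α t₃ = 0)
    (hβ : β t₁ = 0 ∧ β t₂ = 1 ∧ β t₃ = 0)
    (hγ : γ t₁ = 0 ∧ γ t₂ = 0 ∧ γ t₃ = 1)
    (hξ : α + β + γ ∈ rootSet t) :
    ∀ x ∈ rootSpace t (α + β + γ), ∀ y ∈ rootSpace t (α + β + γ),
      ⁅x, y⁆ ∈ Submodule.span F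
          ({((t₁ : g) + (t₃ : g)), ((t₂ : g) + (t₃ : g))} : Set g) ⊔ n := by
  intro x hx y hy
  set ξ : Module.Dual F t := α + β + γ with hξdef
  -- p of a root vector lies in rootSpace 0
  have hp0 : ∀ z ∈ rootSpace t ξ, p z ∈ rootSpace t 0 := by
    intro z hz s
    have h1 : ⁅z, (s : g)⁆ = -(ξ s • z) := by
      rw [← lie_skew, (mem_rootSpace_iff t ξ z).mp hz s]
    rw [LinearMap.zero_apply, zero_smul, ← lie_skew, hp.ad_pow, h1, lie_neg, lie_smul,
      lie_self, smul_zero, neg_zero, neg_zero]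
  have hp00 : p 0 = (0 : g) := by
    have := hp.smul_pow 0 0
    simpa using this
  -- key: the t-component of p z is killed by ξ
  have key : ∀ z ∈ rootSpace t ξ, ∀ s : t, ∀ m ∈ n, (s : g) + m = p z → ξ s = 0 := by
    intro z hz s m hm heq
    by_cases hz0 : z = 0
    · have hs0 : (s : g) = 0 := by
        have hmem : (s : g) ∈ t.toSubmodule ⊓ n := by
          refine ⟨s.2, ?_⟩
          have : (s : g) = -m := by
            rw [hz0, hp00] at heq
            exact eq_neg_of_add_eq_zero_left heq
          rw [this]; exact n.neg_mem hm
        have := hdisj.le_bot hmem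
        simpa using this
      have : s = 0 := Subtype.ext hs0
      rw [this, map_zero]
    · have hlz : ⁅p z, z⁆ = 0 := by rw [hp.ad_pow, lie_self, lie_zero]
      have hmz : ⁅m, z⁆ = (-ξ s) • z := by
        have h1 : ⁅(s : g), z⁆ = ξ s • z := (mem_rootSpace_iff t ξ z).mp hz s
        have h2 : ⁅(s : g) + m, z⁆ = 0 := by rw [heq]; exact hlz
        rw [add_lie, h1, add_comm] at h2
        rw [neg_smul]
        exact eq_neg_of_add_eq_zero_left h2
      obtain ⟨k, hk⟩ := ((hn m).mp hm).2
      have := aux_iter p hp m z (-ξ s) hmz k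
      rw [hk, zero_lie] at this
      have h0 : (-ξ s) ^ (2 ^ k) = 0 := by
        rcases smul_eq_zero.mp this.symm with h | h
        · exact h
        · exact absurd h hz0
      have := pow_eq_zero_iff (n := 2 ^ k) (by positivity) |>.mp h0
      simpa using this
  -- decompose p x, p y, p (x+y)
  have hxy : x + y ∈ rootSpace t ξ := (rootSpace t ξ).add_mem hx hy
  have hd : ∀ z ∈ rootSpace t ξ, ∃ s : t, ∃ m ∈ n, (s : g) + m = p z ∧ ξ s = 0 := by
    intro z hz
    have : p z ∈ t.toSubmodule ⊔ n := by rw [← hdecomp]; exact hp0 z hz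
    obtain ⟨u, hu, v, hv, huv⟩ := Submodule.mem_sup.mp this
    exact ⟨⟨u, hu⟩, v, hv, huv, key z hz ⟨u, hu⟩ v hv huv⟩
  obtain ⟨sx, mx, hmx, hex, hsx⟩ := hd x hx
  obtain ⟨sy, my, hmy, hey, hsy⟩ := hd y hy
  obtain ⟨sz, mz, hmz, hez, hsz⟩ := hd (x + y) hxy
  -- the t-component of ⁅x, y⁆
  set S : t := sz - sx - sy with hS
  have hξS : ξ S = 0 := by rw [hS, map_sub, map_sub, hsx, hsy, hsz]; ring
  have hlie : ((S : g)) + (mz - mx - my) = ⁅x, y⁆ := by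
    have h := hp.add_pow x y
    rw [← hex, ← hey, ← hez] at h
    have : ⁅x, y⁆ = ((sz : g) + mz) - (((sx : g) + mx) + ((sy : g) + my)) := by
      rw [h]; abel
    rw [this, hS]
    push_cast
    abel
  -- write S in coordinates
  have hSmem : S ∈ Submodule.span F ({t₁, t₂, t₃} : Set t) := by
    rw [hspan]; exact Submodule.mem_top
  obtain ⟨a, w, hw, hSw⟩ := Submodule.mem_span_insert.mp hSmem
  obtain ⟨b, c, hbc⟩ := Submodule.mem_span_pair.mp hw
  have hScoord : S = a • t₁ + b • t₂ + c • t₃ := by rw [hSw, ← hbc]; abel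
  have hξ1 : ξ t₁ = 1 := by
    simp [hξdef, hα.1, hβ.1, hγ.1]
  have hξ2 : ξ t₂ = 1 := by
    simp [hξdef, hα.2.1, hβ.2.1, hγ.2.1]
  have hξ3 : ξ t₃ = 1 := by
    simp [hξdef, hα.2.2, hβ.2.2, hγ.2.2]
  have habc : a + b + c = 0 := by
    have := hξS
    rw [hScoord] at this
    simpa [map_add, map_smul, hξ1, hξ2, hξ3] using this
  have hc : c = a + b := by
    have : c = -(a + b) := by linear_combination habc
    rw [this, CharTwo.neg_eq]
  -- conclude
  apply Submodule.mem_sup.mpr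
  refine ⟨(S : g), ?_, mz - mx - my, n.sub_mem (n.sub_mem hmz hmx) hmy, hlie⟩
  apply Submodule.mem_span_pair.mpr
  refine ⟨a, b, ?_⟩
  have : (S : g) = a • (t₁ : g) + b • (t₂ : g) + c • (t₃ : g) := by
    rw [hScoord]; norm_cast
  rw [this, hc]
  module
end

section
/- Let g be a centerless Lie 2-algebra with MT(g) = 3, standard maximal torus t with toral basis {t1, t2, t3} and dual basis {α, β, γ} of t*, whose t-root set is Δ = {α, β, γ, α+β, α+γ, β+γ, α+β+γ}. Assume dim(g_α) = dim(g_β) = dim(g_{α+β}) ≥ dim(g_γ) ≥ dim(g_{α+γ}) ≥ dim(g_{β+γ}) > dim(g_{α+β+γ}). Then I := span{t1 + t2, t1 + t3} ⊕ n ⊕ ⊕_{ξ∈Δ} g_ξ is an ideal of g. -/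
/-!
The torus `t` lies in `g_0`, so it is abelian and the `ad tᵢ` are commuting idempotents
(`ad tᵢ ^ 2 = ad (p tᵢ) = ad tᵢ`); hence `g` is the sum of the root spaces. Brackets with `g_0`
or between root spaces `g_ξ`, `g_ζ` with `ξ ≠ ζ` stay in `I` by additivity of roots, so only
`[g_ξ, g_ξ]` matters. As `[x, y] = p (x + y) - p x - p y`, it suffices that for `x ∈ g_ξ` the
`t`-component `s` of `p x = s + n₀ ∈ t ⊕ n` is killed by `τ = α + β + γ`, whose kernel is
`span {t₁ + t₂, t₁ + t₃}`. First `ξ(s) = 0`: on `g_ξ` the operator `ad (p x) = (ad x)^2` acts as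
`ξ(s) + ad n₀`, and it is nilpotent there because it commutes with `ad x`, which maps `g_ξ` into
`g_0`, where `ad (p x)` acts as the nilpotent `ad n₀`. If `τ(s) ≠ 0`, then for `ξ ≠ τ` the same
decomposition makes `ad x` injective from `g_{τ+ξ}` to `g_τ`, whereas the dimension hypotheses
make `g_τ` strictly smaller than every other root space.
-/

open LieAlgebra (ad ad_apply)

theorem Module.End.iSup_iInf_eigenspace_eq_top_of_isIdempotentElem {K M ι : Type*} [Field K]
    [AddCommGroup M] [Module K M] [Fintype ι] (f : ι → Module.End K M)
    (hf : ∀ i, IsIdempotentElem (f i)) (hc : ∀ i j, Commute (f i) (f j)) :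
    ⨆ χ : ι → K, ⨅ i, (f i).eigenspace (χ i) = ⊤ := by
  classical
  suffices h : ∀ s : Finset ι, ⨆ χ : ι → K, ⨅ i ∈ s, (f i).eigenspace (χ i) = ⊤ by
    simpa using h Finset.univ
  intro s
  induction s using Finset.induction_on with
  | empty => simp
  | insert j s hj ih =>
    rw [eq_top_iff]
    rintro v -
    have hv : v ∈ ⨆ χ : ι → K, ⨅ i ∈ s, (f i).eigenspace (χ i) := by rw [ih]; trivial
    induction hv using Submodule.iSup_induction' with
    | zero => exact zero_mem _
    | add v w _ _ hv hw => exact add_mem hv hw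
    | mem χ v hv =>
      simp only [Submodule.mem_iInf, mem_eigenspace_iff] at hv
      have hfj : ∀ i ∈ s, (f i) (f j v) = χ i • f j v := fun i hi => by
        rw [← mul_apply, (hc i j).eq, mul_apply, hv i hi, map_smul]
      have hsplit : v = (v - f j v) + f j v := (sub_add_cancel v _).symm
      rw [hsplit]
      refine add_mem (Submodule.mem_iSup_of_mem (Function.update χ j 0) ?_)
        (Submodule.mem_iSup_of_mem (Function.update χ j 1) ?_) <;>
        simp only [Submodule.mem_iInf, mem_eigenspace_iff, Finset.mem_insert] <;>
        rintro i (rfl | hi)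
      · rw [map_sub, ← mul_apply, (hf i).eq, sub_self, Function.update_self, zero_smul]
      · rw [Function.update_of_ne (ne_of_mem_of_not_mem hi hj), map_sub, hv i hi, hfj i hi,
          smul_sub]
      · rw [← mul_apply, (hf i).eq, Function.update_self, one_smul]
      · rw [Function.update_of_ne (ne_of_mem_of_not_mem hi hj), hfj i hi]

theorem Module.End.eq_zero_of_isNilpotent_of_apply_eq_smul {K M : Type*} [Field K]
    [AddCommGroup M] [Module K M] {f : Module.End K M} (hf : IsNilpotent f) {c : K} (hc : c ≠ 0)
    {v : M} (hv : f v = c • v) : v = 0 := by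
  by_contra hv0
  exact hc (HasEigenvalue.isNilpotent_of_isNilpotent hf
    (hasEigenvalue_of_hasEigenvector ⟨mem_eigenspace_iff.mpr hv, hv0⟩)).eq_zero

theorem add_self_eq_zero_of_charP_two (K : Type*) {M : Type*} [Field K] [CharP K 2]
    [AddCommGroup M] [Module K M] (v : M) : v + v = 0 := by
  rw [← two_smul K v, CharTwo.two_eq_zero, zero_smul]

theorem eq_smul_add_smul_add_smul_of_span_eq_top {K V : Type*} [Field K] [AddCommGroup V]
    [Module K V] {t₁ t₂ t₃ : V} (hspan : Submodule.span K ({t₁, t₂, t₃} : Set V) = ⊤)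
    {α β γ : Module.Dual K V} (hα : α t₁ = 1 ∧ α t₂ = 0 ∧ α t₃ = 0)
    (hβ : β t₁ = 0 ∧ β t₂ = 1 ∧ β t₃ = 0) (hγ : γ t₁ = 0 ∧ γ t₂ = 0 ∧ γ t₃ = 1) (a : V) :
    a = α a • t₁ + β a • t₂ + γ a • t₃ := by
  obtain ⟨c₁, c₂, c₃, rfl⟩ := Submodule.mem_span_triple.mp (hspan ▸ Submodule.mem_top (x := a))
  simp [hα, hβ, hγ]

theorem mem_span_add_add_of_apply_eq_zero {K V : Type*} [Field K] [CharP K 2] [AddCommGroup V]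
    [Module K V] {t₁ t₂ t₃ : V} {α β γ : Module.Dual K V}
    (hcoord : ∀ a : V, a = α a • t₁ + β a • t₂ + γ a • t₃) {a : V} (ha : (α + β + γ) a = 0) :
    a ∈ Submodule.span K ({t₁ + t₂, t₁ + t₃} : Set V) := by
  have hα : α a = β a + γ a := by
    rw [LinearMap.add_apply, LinearMap.add_apply] at ha
    linear_combination ha - (β a + γ a) * CharTwo.two_eq_zero (R := K)
  refine Submodule.mem_span_pair.mpr ⟨β a, γ a, ?_⟩
  conv_rhs => rw [hcoord a, hα]
  module

section LieTwoAlgebra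

variable {F : Type*} [Field F] {g : Type*} [LieRing g] [LieAlgebra F g] {p : g → g}
  {t : LieSubalgebra F g}

theorem IsTwoMap.ad_eq_sq (hp : IsTwoMap F p) (x : g) : ad F g (p x) = ad F g x ^ 2 := by
  ext y
  simp [pow_two, hp.ad_pow]

theorem IsTwoMap.ad_iterate_s12 (hp : IsTwoMap F p) (x : g) (k : ℕ) :
    ad F g (p^[k] x) = ad F g x ^ 2 ^ k := by
  induction k with
  | zero => simp
  | succ k ih => rw [Function.iterate_succ_apply', hp.ad_eq_sq, ih, ← pow_mul, pow_succ]

theorem IsTwoMap.isNilpotent_ad (hp : IsTwoMap F p) {x : g} (hx : IsTwoNilpotent p x) :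
    IsNilpotent (ad F g x) := by
  obtain ⟨k, hk⟩ := hx
  exact ⟨2 ^ k, by rw [← hp.ad_iterate_s12, hk]; exact (ad F g).map_zero⟩

theorem lie_mem_rootSpace_add {ξ ζ : Module.Dual F t} {x y : g} (hx : x ∈ rootSpace t ξ)
    (hy : y ∈ rootSpace t ζ) : ⁅x, y⁆ ∈ rootSpace t (ξ + ζ) := by
  intro a
  rw [leibniz_lie, hx a, hy a, lie_smul, smul_lie, LinearMap.add_apply, add_smul]

theorem lie_eq_zero_of_mem_rootSpace_zero (a : t) {u : g} (hu : u ∈ rootSpace t 0) :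
    ⁅(a : g), u⁆ = 0 := by
  simpa using hu a

theorem rootSpace_le_iSup_rootSet {μ : Module.Dual F t} (hμ : μ ≠ 0) :
    rootSpace t μ ≤ ⨆ ξ ∈ rootSet t, rootSpace t ξ := by
  by_cases hbot : rootSpace t μ = ⊥
  · simp [hbot]
  · exact le_iSup₂_of_le μ ⟨hμ, hbot⟩ le_rfl

theorem iSup_rootSpace_eq_top_s12 (hp : IsTwoMap F p) {ι : Type*} [Fintype ι]
    (b : ι → t) (hb : ∀ i, p (b i) = b i) (ω : ι → Module.Dual F t)
    (hcoord : ∀ a : t, a = ∑ i, ω i a • b i) (habel : ∀ a b : t, ⁅(a : g), (b : g)⁆ = 0) :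
    ⨆ μ, rootSpace t μ = ⊤ := by
  have hidem : ∀ i, IsIdempotentElem (ad F g (b i)) := fun i => by
    rw [IsIdempotentElem, ← pow_two, ← hp.ad_eq_sq, hb]
  have hcomm : ∀ i j, Commute (ad F g (b i)) (ad F g (b j)) := fun i j => by
    refine LinearMap.ext fun v => ?_
    simp only [Module.End.mul_apply, ad_apply]
    rw [leibniz_lie, habel, zero_lie, zero_add]
  rw [eq_top_iff, ← Module.End.iSup_iInf_eigenspace_eq_top_of_isIdempotentElem _ hidem hcomm]
  refine iSup_le fun χ v hv => Submodule.mem_iSup_of_mem (∑ i, χ i • ω i) fun a => ?_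
  simp only [Submodule.mem_iInf, Module.End.mem_eigenspace_iff, ad_apply] at hv
  calc ⁅(a : g), v⁆ = ⁅((∑ i, ω i a • b i : t) : g), v⁆ := by rw [← hcoord a]
    _ = (∑ i, χ i • ω i) a • v := by
      simp [sum_lie, hv, smul_smul, Finset.sum_smul, mul_comm]

theorem IsTwoMap.map_mem_rootSpace_zero (hp : IsTwoMap F p) {ξ : Module.Dual F t}
    {x : g} (hx : x ∈ rootSpace t ξ) : p x ∈ rootSpace t 0 := by
  intro a
  rw [← lie_skew, hp.ad_pow, ← lie_skew x (a : g), hx a]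
  simp

theorem eq_zero_of_lie_add_eq_zero {μ : Module.Dual F t} {s n₀ v : g} (hs : s ∈ t)
    (hn₀ : IsNilpotent (ad F g n₀)) (hμ : μ ⟨s, hs⟩ ≠ 0) (hv : v ∈ rootSpace t μ)
    (h : ⁅s + n₀, v⁆ = 0) : v = 0 := by
  refine Module.End.eq_zero_of_isNilpotent_of_apply_eq_smul hn₀ (neg_ne_zero.mpr hμ) ?_
  rw [add_lie, hv ⟨s, hs⟩] at h
  rw [ad_apply, neg_smul, eq_neg_of_add_eq_zero_right h]

theorem IsTwoMap.apply_eq_zero_of_eq_add (hp : IsTwoMap F p) {ξ : Module.Dual F t}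
    (hξ : rootSpace t ξ ≠ ⊥) (hξξ : ξ + ξ = 0) {x s n₀ : g} (hx : x ∈ rootSpace t ξ)
    (hs : s ∈ t) (hn₀ : n₀ ∈ rootSpace t 0) (hN : IsNilpotent (ad F g n₀))
    (hpx : p x = s + n₀) : ξ ⟨s, hs⟩ = 0 := by
  by_contra hc
  obtain ⟨m, hm⟩ := hN
  have hPξ : ∀ v ∈ rootSpace t ξ, ⁅p x, v⁆ ∈ rootSpace t ξ := fun v hv => by
    simpa using lie_mem_rootSpace_add (hp.map_mem_rootSpace_zero hx) hv
  have hPN : ∀ k, ∀ u ∈ rootSpace t 0, (ad F g (p x) ^ k) u = (ad F g n₀ ^ k) u := by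
    intro k
    induction k with
    | zero => simp
    | succ k ih =>
      intro u hu
      have hNu : ⁅n₀, u⁆ ∈ rootSpace t 0 := by simpa using lie_mem_rootSpace_add hn₀ hu
      rw [pow_succ, pow_succ, Module.End.mul_apply, Module.End.mul_apply, ad_apply, ad_apply,
        ← ih _ hNu, hpx, add_lie, lie_eq_zero_of_mem_rootSpace_zero ⟨s, hs⟩ hu, zero_add]
  have hcomm : Commute (ad F g x) (ad F g (p x) ^ m) := by
    rw [hp.ad_eq_sq]
    exact (Commute.self_pow _ 2).pow_right m
  have hkill : ∀ v ∈ rootSpace t ξ, (ad F g (p x) ^ (m + 1)) v = 0 := by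
    intro v hv
    have hxv : ⁅x, v⁆ ∈ rootSpace t 0 := by simpa [hξξ] using lie_mem_rootSpace_add hx hv
    calc (ad F g (p x) ^ (m + 1)) v = (ad F g (p x) ^ m) ⁅x, ⁅x, v⁆⁆ := by
          rw [pow_succ, Module.End.mul_apply, ad_apply, hp.ad_pow]
      _ = ⁅x, (ad F g (p x) ^ m) ⁅x, v⁆⁆ := LinearMap.congr_fun hcomm.eq.symm _
      _ = 0 := by rw [hPN m _ hxv, hm, LinearMap.zero_apply, lie_zero]
  have hinj : ∀ k, ∀ v ∈ rootSpace t ξ, (ad F g (p x) ^ k) v = 0 → v = 0 := by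
    intro k
    induction k with
    | zero => simp
    | succ k ih =>
      intro v hv h
      rw [pow_succ, Module.End.mul_apply] at h
      exact eq_zero_of_lie_add_eq_zero hs ⟨m, hm⟩ hc hv (hpx ▸ ih _ (hPξ v hv) h)
  exact hξ (eq_bot_iff.mpr fun v hv => hinj _ v hv (hkill v hv))

theorem IsTwoMap.finrank_rootSpace_le_of_eq_add [FiniteDimensional F g]
    (hp : IsTwoMap F p) {ξ μ : Module.Dual F t} {x s n₀ : g} (hx : x ∈ rootSpace t ξ)
    (hs : s ∈ t) (hN : IsNilpotent (ad F g n₀)) (hpx : p x = s + n₀) (hμ : μ ⟨s, hs⟩ ≠ 0) :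
    Module.finrank F (rootSpace t μ) ≤ Module.finrank F (rootSpace t (ξ + μ)) := by
  refine LinearMap.finrank_le_finrank_of_injective
    (f := (ad F g x).restrict fun v hv => lie_mem_rootSpace_add hx hv) ?_
  rw [← LinearMap.ker_eq_bot, LinearMap.ker_eq_bot']
  intro v hv
  have hxv : ⁅x, (v : g)⁆ = 0 := congrArg Subtype.val hv
  refine Subtype.ext (eq_zero_of_lie_add_eq_zero hs hN hμ v.2 ?_)
  rw [← hpx, hp.ad_pow, hxv, lie_zero]

theorem IsTwoMap.map_mem_sup_of_finrank_lt [CharP F 2] [FiniteDimensional F g]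
    (hp : IsTwoMap F p) {n S : Submodule F g}
    (hn : ∀ x : g, x ∈ n ↔ x ∈ rootSpace t 0 ∧ IsTwoNilpotent p x)
    (hdecomp : rootSpace t 0 = t.toSubmodule ⊔ n) {τ : Module.Dual F t}
    (hτ : ∀ ξ ∈ rootSet t, ξ ≠ τ →
      Module.finrank F (rootSpace t τ) < Module.finrank F (rootSpace t (τ + ξ)))
    (hS : ∀ a : t, τ a = 0 → (a : g) ∈ S) {ξ : Module.Dual F t} (hξ : ξ ∈ rootSet t) {x : g}
    (hx : x ∈ rootSpace t ξ) : p x ∈ S ⊔ n := by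
  have hpx := hp.map_mem_rootSpace_zero hx
  rw [hdecomp] at hpx
  obtain ⟨s, hs, n₀, hn₀, hpx⟩ := Submodule.mem_sup.mp hpx
  obtain ⟨hn₀g₀, hn₀nil⟩ := (hn n₀).mp hn₀
  have hN := hp.isNilpotent_ad hn₀nil
  have hξs := hp.apply_eq_zero_of_eq_add hξ.2 (add_self_eq_zero_of_charP_two F ξ) hx hs hn₀g₀ hN
    hpx.symm
  refine Submodule.mem_sup.mpr ⟨s, hS ⟨s, hs⟩ ?_, n₀, hn₀, hpx⟩
  by_contra hτs
  have hτξ : ξ ≠ τ := by rintro rfl; exact hτs hξs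
  have hle := hp.finrank_rootSpace_le_of_eq_add (μ := τ + ξ) hx hs hN hpx.symm
    (by rwa [LinearMap.add_apply, hξs, add_zero])
  rw [add_left_comm, add_self_eq_zero_of_charP_two F ξ, add_zero] at hle
  exact (hτ ξ hξ hτξ).not_ge hle

theorem lie_mem_sup_iSup_rootSpace [CharP F 2] (hp : IsTwoMap F p)
    {S n : Submodule F g} (hS : S ≤ t.toSubmodule) (hn : n ≤ rootSpace t 0)
    (hstd : ∀ x ∈ rootSpace t 0, ∀ y ∈ n, ⁅x, y⁆ ∈ n) (htop : ⨆ μ, rootSpace t μ = ⊤)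
    (hpS : ∀ ξ ∈ rootSet t, ∀ x ∈ rootSpace t ξ, p x ∈ S ⊔ n) (x y : g)
    (hy : y ∈ S ⊔ n ⊔ ⨆ ξ ∈ rootSet t, rootSpace t ξ) :
    ⁅x, y⁆ ∈ S ⊔ n ⊔ ⨆ ξ ∈ rootSet t, rootSpace t ξ := by
  set R := ⨆ ξ ∈ rootSet t, rootSpace t ξ
  let B : g →ₗ[F] g →ₗ[F] g :=
    LinearMap.mk₂ F (fun x y => ⁅x, y⁆) add_lie smul_lie lie_add lie_smul
  have hR : ∀ {μ : Module.Dual F t}, μ ≠ 0 → rootSpace t μ ≤ S ⊔ n ⊔ R :=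
    fun hμ => (rootSpace_le_iSup_rootSet hμ).trans le_sup_right
  suffices h : Submodule.map₂ B ⊤ (S ⊔ n ⊔ R) ≤ S ⊔ n ⊔ R from
    Submodule.map₂_le.mp h x Submodule.mem_top y hy
  rw [← htop, Submodule.map₂_iSup_left, iSup_le_iff]
  intro μ
  simp only [R, Submodule.map₂_sup_right, Submodule.map₂_iSup_right, sup_le_iff, iSup_le_iff,
    Submodule.map₂_le, B, LinearMap.mk₂_apply]
  refine ⟨⟨fun x hx y hy => ?_, fun x hx y hy => ?_⟩, fun ζ hζ x hx y hy => ?_⟩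
  · rw [← lie_skew, hx ⟨y, hS hy⟩]
    by_cases hμ : μ = 0
    · simp [hμ]
    · exact neg_mem (Submodule.smul_mem _ _ (hR hμ hx))
  · by_cases hμ : μ = 0
    · subst hμ
      exact (le_sup_right.trans le_sup_left : n ≤ S ⊔ n ⊔ R) (hstd x hx y hy)
    · exact hR hμ (by simpa using lie_mem_rootSpace_add hx (hn hy))
  · by_cases hμζ : μ = ζ
    · subst hμζ
      have hxy : ⁅x, y⁆ = p (x + y) - (p x + p y) := by rw [hp.add_pow]; abel
      rw [hxy]
      exact (le_sup_left : S ⊔ n ≤ S ⊔ n ⊔ R) (sub_mem (hpS μ hζ _ (add_mem hx hy))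
        (add_mem (hpS μ hζ x hx) (hpS μ hζ y hy)))
    · refine hR (fun h => hμζ ?_) (lie_mem_rootSpace_add hx hy)
      rw [← add_zero μ, ← add_self_eq_zero_of_charP_two F ζ, ← add_assoc, h, zero_add]

theorem finrank_rootSpace_lt_add [CharP F 2] {α β γ : Module.Dual F t}
    (hroots : rootSet t = ({α, β, γ, α + β, α + γ, β + γ, α + β + γ} :
      Set (Module.Dual F t)))
    (h1 : Module.finrank F (rootSpace t α) = Module.finrank F (rootSpace t β))
    (h2 : Module.finrank F (rootSpace t β) = Module.finrank F (rootSpace t (α + β)))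
    (h3 : Module.finrank F (rootSpace t γ) ≤ Module.finrank F (rootSpace t (α + β)))
    (h4 : Module.finrank F (rootSpace t (α + γ)) ≤ Module.finrank F (rootSpace t γ))
    (h5 : Module.finrank F (rootSpace t (β + γ)) ≤ Module.finrank F (rootSpace t (α + γ)))
    (h6 : Module.finrank F (rootSpace t (α + β + γ)) <
      Module.finrank F (rootSpace t (β + γ))) :
    ∀ ξ ∈ rootSet t, ξ ≠ α + β + γ → Module.finrank F (rootSpace t (α + β + γ)) <
      Module.finrank F (rootSpace t (α + β + γ + ξ)) := by
  have hα := add_self_eq_zero_of_charP_two F α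
  have hβ := add_self_eq_zero_of_charP_two F β
  have hγ := add_self_eq_zero_of_charP_two F γ
  rw [hroots]
  rintro ξ (h | h | h | h | h | h | h) hξ <;> rw [h]
  · rw [show α + β + γ + α = β + γ by linear_combination (norm := module) hα]
    omega
  · rw [show α + β + γ + β = α + γ by linear_combination (norm := module) hβ]
    omega
  · rw [show α + β + γ + γ = α + β by linear_combination (norm := module) hγ]
    omega
  · rw [show α + β + γ + (α + β) = γ by linear_combination (norm := module) hα + hβ]
    omega
  · rw [show α + β + γ + (α + γ) = β by linear_combination (norm := module) hα + hγ]
    omega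
  · rw [show α + β + γ + (β + γ) = α by linear_combination (norm := module) hβ + hγ]
    omega
  · exact absurd h hξ

end LieTwoAlgebra

theorem statement12_general
    {F : Type*} [Field F] [CharP F 2]
    {g : Type*} [LieRing g] [LieAlgebra F g] [FiniteDimensional F g]
    (p : g → g) (hp : IsTwoMap F p)
    (t : LieSubalgebra F g)
    (n : Submodule F g)
    (hn : ∀ x : g, x ∈ n ↔ x ∈ rootSpace t 0 ∧ IsTwoNilpotent p x)
    (hstd : ∀ x ∈ rootSpace t 0, ∀ y ∈ n, ⁅x, y⁆ ∈ n)
    (hdecomp : rootSpace t 0 = t.toSubmodule ⊔ n)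
    (t₁ t₂ t₃ : t)
    (htor1 : p (t₁ : g) = (t₁ : g)) (htor2 : p (t₂ : g) = (t₂ : g))
    (htor3 : p (t₃ : g) = (t₃ : g))
    (hspan : Submodule.span F ({t₁, t₂, t₃} : Set t) = ⊤)
    (α β γ : Module.Dual F t)
    (hα : α t₁ = 1 ∧ α t₂ = 0 ∧ α t₃ = 0)
    (hβ : β t₁ = 0 ∧ β t₂ = 1 ∧ β t₃ = 0)
    (hγ : γ t₁ = 0 ∧ γ t₂ = 0 ∧ γ t₃ = 1)
    (hroots : rootSet t = ({α, β, γ, α + β, α + γ, β + γ, α + β + γ} :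
      Set (Module.Dual F t)))
    (h1 : Module.finrank F (rootSpace t α) = Module.finrank F (rootSpace t β))
    (h2 : Module.finrank F (rootSpace t β) = Module.finrank F (rootSpace t (α + β)))
    (h3 : Module.finrank F (rootSpace t γ) ≤ Module.finrank F (rootSpace t (α + β)))
    (h4 : Module.finrank F (rootSpace t (α + γ)) ≤ Module.finrank F (rootSpace t γ))
    (h5 : Module.finrank F (rootSpace t (β + γ)) ≤ Module.finrank F (rootSpace t (α + γ)))
    (h6 : Module.finrank F (rootSpace t (α + β + γ)) <
      Module.finrank F (rootSpace t (β + γ))) :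
    ∀ x y : g,
      y ∈ Submodule.span F ({(t₁ : g) + (t₂ : g), (t₁ : g) + (t₃ : g)} : Set g) ⊔ n ⊔
          (⨆ ξ ∈ rootSet t, rootSpace t ξ) →
      ⁅x, y⁆ ∈ Submodule.span F ({(t₁ : g) + (t₂ : g), (t₁ : g) + (t₃ : g)} : Set g) ⊔ n ⊔
          (⨆ ξ ∈ rootSet t, rootSpace t ξ) := by
  have habel : ∀ a b : t, ⁅(a : g), (b : g)⁆ = 0 := fun a b =>
    lie_eq_zero_of_mem_rootSpace_zero a (hdecomp ▸ Submodule.mem_sup_left b.2)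
  have hcoord := eq_smul_add_smul_add_smul_of_span_eq_top hspan hα hβ hγ
  have htop : ⨆ μ, rootSpace t μ = ⊤ :=
    iSup_rootSpace_eq_top_s12 hp ![t₁, t₂, t₃] (by simp [Fin.forall_fin_succ, htor1, htor2, htor3])
      ![α, β, γ] (by simpa [Fin.sum_univ_three] using hcoord) habel
  have hS : ∀ a : t, (α + β + γ) a = 0 →
      (a : g) ∈ Submodule.span F ({(t₁ : g) + (t₂ : g), (t₁ : g) + (t₃ : g)} : Set g) :=
    fun a ha => by
      simpa [Set.image_insert_eq] using Submodule.apply_mem_span_image_of_mem_span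
        (t.incl : t →ₗ[F] g) (mem_span_add_add_of_apply_eq_zero hcoord ha)
  refine lie_mem_sup_iSup_rootSpace hp ?_ (fun x hx => ((hn x).mp hx).1) hstd htop
    fun ξ hξ x hx => hp.map_mem_sup_of_finrank_lt hn hdecomp
      (finrank_rootSpace_lt_add hroots h1 h2 h3 h4 h5 h6) hS hξ hx
  rw [Submodule.span_le]
  rintro _ (rfl | rfl)
  exacts [add_mem t₁.2 t₂.2, add_mem t₁.2 t₃.2]

/-- Case A with `dim g_{β+γ} > dim g_{α+β+γ}`:
`span{t1 + t2, t1 + t3} ⊕ n ⊕ ⊕_{ξ∈Δ} g_ξ` is an ideal of `g`. -/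
theorem statement12
    {F : Type*} [Field F] [IsAlgClosed F] [CharP F 2]
    {g : Type*} [LieRing g] [LieAlgebra F g] [FiniteDimensional F g]
    (p : g → g) (hp : IsTwoMap F p)
    (hcenter : LieAlgebra.center F g = ⊥)
    (t : LieSubalgebra F g) (hmax : IsMaxTorus F p t)
    (n : Submodule F g)
    (hn : ∀ x : g, x ∈ n ↔ x ∈ rootSpace t 0 ∧ IsTwoNilpotent p x)
    (hstd : ∀ x ∈ rootSpace t 0, ∀ y ∈ n, ⁅x, y⁆ ∈ n)
    (hdecomp : rootSpace t 0 = t.toSubmodule ⊔ n)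
    (hdisj : Disjoint t.toSubmodule n)
    (hrank : ∀ s : LieSubalgebra F g, IsTorus F p s → Module.finrank F s ≤ 3)
    (hdimt : Module.finrank F t = 3)
    (t₁ t₂ t₃ : t)
    (htor1 : p (t₁ : g) = (t₁ : g)) (htor2 : p (t₂ : g) = (t₂ : g))
    (htor3 : p (t₃ : g) = (t₃ : g))
    (hspan : Submodule.span F ({t₁, t₂, t₃} : Set t) = ⊤)
    (α β γ : Module.Dual F t)
    (hα : α t₁ = 1 ∧ α t₂ = 0 ∧ α t₃ = 0)
    (hβ : β t₁ = 0 ∧ β t₂ = 1 ∧ β t₃ = 0)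
    (hγ : γ t₁ = 0 ∧ γ t₂ = 0 ∧ γ t₃ = 1)
    (hroots : rootSet t = ({α, β, γ, α + β, α + γ, β + γ, α + β + γ} :
      Set (Module.Dual F t)))
    (h1 : Module.finrank F (rootSpace t α) = Module.finrank F (rootSpace t β))
    (h2 : Module.finrank F (rootSpace t β) = Module.finrank F (rootSpace t (α + β)))
    (h3 : Module.finrank F (rootSpace t γ) ≤ Module.finrank F (rootSpace t (α + β)))
    (h4 : Module.finrank F (rootSpace t (α + γ)) ≤ Module.finrank F (rootSpace t γ))
    (h5 : Module.finrank F (rootSpace t (β + γ)) ≤ Module.finrank F (rootSpace t (α + γ)))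
    (h6 : Module.finrank F (rootSpace t (α + β + γ)) <
      Module.finrank F (rootSpace t (β + γ))) :
    ∀ x y : g,
      y ∈ Submodule.span F ({(t₁ : g) + (t₂ : g), (t₁ : g) + (t₃ : g)} : Set g) ⊔ n ⊔
          (⨆ ξ ∈ rootSet t, rootSpace t ξ) →
      ⁅x, y⁆ ∈ Submodule.span F ({(t₁ : g) + (t₂ : g), (t₁ : g) + (t₃ : g)} : Set g) ⊔ n ⊔
          (⨆ ξ ∈ rootSet t, rootSpace t ξ) :=
  statement12_general p hp t n hn hstd hdecomp t₁ t₂ t₃ htor1 htor2 htor3 hspan α β γ hα hβ hγ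
    hroots h1 h2 h3 h4 h5 h6
end
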